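/- arXiv:2112.12075 — 2 statements merged into one kernel-verified Lean document; each statement's English description precedes it below -/
import Mathlib

section
/- Let α, a, x, y, z, t ∈ ℂ and r̃, s̃ ∈ ℤ with r̃ > s̃ and |xt| < 1. Then the series ∑_{n=0}^∞ L̃_n^{(r̃,s̃)}(α,x,y,z,a) · t^n/(q;q)_n converges absolutely and its sum equals ((yt;q)_∞/(xt;q)_∞) · ∑_{k=0}^∞ ((−q^{−α};q)_k (a;q)_k/(q²;q²)_k) · q^{kα + r̃·C(k,2) − s̃·C(k+1,2)} (zt)^k, the series over k also converging absolutely. -/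
noncomputable section

/-- The q-shifted factorial `(a;q)_n`. -/
def qPoch (q a : ℂ) (n : ℕ) : ℂ := ∏ j ∈ Finset.range n, (1 - a * q ^ j)

/-- The infinite q-shifted factorial `(a;q)_∞`. -/
def qPochInf (q a : ℂ) : ℂ := ∏' j : ℕ, (1 - a * q ^ j)

/-- The q-binomial coefficient `[n k]_q`. -/
def qBinom (q : ℂ) (n k : ℕ) : ℂ := qPoch q q n / (qPoch q q k * qPoch q q (n - k))

/-- The Cauchy polynomials `p_n(x,y)`. -/
def cauchyP (q x y : ℂ) (n : ℕ) : ℂ := ∏ j ∈ Finset.range n, (x - q ^ j * y)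

/-- The generalized q-binomial coefficient `[α k]_{-q}`. -/
def genQBinom (q α : ℂ) (k : ℕ) : ℂ :=
  qPoch q (-(q ^ (-α))) k / qPoch q (-q) k * q ^ (α * (k : ℂ) - (k.choose 2 : ℂ))

/-- The generalized q-polynomials `L̃_n^{(r,s)}(α,x,y,z,a)`. -/
def Ltil (q : ℂ) (r s : ℤ) (α x y z a : ℂ) (n : ℕ) : ℂ :=
  ∑ k ∈ Finset.range (n + 1),
    qBinom q n k * genQBinom q α k *
      q ^ (r * (k.choose 2 : ℤ) - s * ((k + 1).choose 2 : ℤ) + (k.choose 2 : ℤ)) *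
      qPoch q a k * cauchyP q x y (n - k) * z ^ k

/-- The basic hypergeometric series `₂Φ₁[a,b;c;q;z]`. -/
def Phi21 (q a b c z : ℂ) : ℂ :=
  ∑' n : ℕ, qPoch q a n * qPoch q b n / (qPoch q c n * qPoch q q n) * z ^ n

/-- The basic hypergeometric series `₄Φ₃`. -/
def Phi43 (q a₁ a₂ a₃ a₄ b₁ b₂ b₃ z : ℂ) : ℂ :=
  ∑' n : ℕ, qPoch q a₁ n * qPoch q a₂ n * qPoch q a₃ n * qPoch q a₄ n /
    (qPoch q b₁ n * qPoch q b₂ n * qPoch q b₃ n * qPoch q q n) * z ^ n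

/-- The trivariate q-polynomials `F_n(x,y,z;q)`. -/
def Ftri (q x y z : ℂ) (n : ℕ) : ℂ :=
  (-1) ^ n * q ^ (-(n.choose 2 : ℤ)) *
    ∑ k ∈ Finset.range (n + 1),
      qBinom q n k * q ^ (k.choose 2) * (-z) ^ k * cauchyP q y x (n - k)

/-- The Hahn (Al-Salam–Carlitz) polynomials `φ_n^{(σ)}(x|q)`. -/
def hahnPhi (q σ x : ℂ) (n : ℕ) : ℂ :=
  ∑ k ∈ Finset.range (n + 1), qBinom q n k * qPoch q σ k * x ^ k

/-- The q-derivative operator `D_a`. -/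
def Dq (q : ℂ) (f : ℂ → ℂ) : ℂ → ℂ := fun a => (f a - f (q * a)) / a

/-- The homogeneous q-difference operator `D_{xy}`. -/
def Dxy (q : ℂ) (f : ℂ → ℂ → ℂ) : ℂ → ℂ → ℂ :=
  fun x y => (f x (y / q) - f (q * x) y) / (x - y / q)

/-!
Expanding the q-binomial coefficient and using `(q;q)_k (-q;q)_k = (q²;q²)_k`, the `n`-th term
`L̃_n t^n / (q;q)_n` of the left-hand series is the Cauchy product `∑_{k+m=n} A_k B_m`, where `A_k`
is the `k`-th term of the right-hand series and `B_m = p_m(x,y) t^m / (q;q)_m`. Both series converge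
absolutely by the ratio test: `A_{k+1}/A_k` is `O(q^{(r-s)k})`, which tends to `0` as `r > s`, and
`B_{m+1}/B_m → xt`. Hence the left-hand side is `(∑ A_k)(∑ B_m)`, and `∑ B_m = (yt;q)_∞/(xt;q)_∞`
is Cauchy's q-binomial theorem: `F(u) = ∑ B_m(u)` satisfies `(1 - xu) F(u) = (1 - yu) F(qu)`, so
`F(u) (xu;q)_N = (yu;q)_N F(q^N u)`, and `F(q^N u) → F(0) = 1`.
-/

open Filter Topology

lemma one_sub_ne_zero_of_norm_lt_one {R : Type*} [SeminormedRing R] [NormOneClass R] {w : R}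
    (hw : ‖w‖ < 1) : 1 - w ≠ 0 := by
  rw [sub_ne_zero]
  rintro rfl
  simp at hw

lemma norm_mul_pow_lt_one {q c : ℂ} (hq : ‖q‖ ≤ 1) (hc : ‖c‖ < 1) (j : ℕ) :
    ‖c * q ^ j‖ < 1 := by
  rw [norm_mul, norm_pow]
  exact (mul_le_of_le_one_right (norm_nonneg c) (pow_le_one₀ (norm_nonneg q) hq)).trans_lt hc

lemma tendsto_one_sub_mul_pow {q : ℂ} (hq : ‖q‖ < 1) (c : ℂ) :
    Tendsto (fun j : ℕ => 1 - c * q ^ j) atTop (𝓝 1) := by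
  simpa using tendsto_const_nhds.sub
    ((tendsto_pow_atTop_nhds_zero_of_norm_lt_one hq).const_mul c)

section QPochhammer

lemma qPoch_zero (q a : ℂ) : qPoch q a 0 = 1 := Finset.prod_range_zero _

lemma qPoch_succ (q a : ℂ) (n : ℕ) : qPoch q a (n + 1) = qPoch q a n * (1 - a * q ^ n) :=
  Finset.prod_range_succ _ _

lemma cauchyP_zero (q x y : ℂ) : cauchyP q x y 0 = 1 := Finset.prod_range_zero _

lemma cauchyP_succ (q x y : ℂ) (n : ℕ) :
    cauchyP q x y (n + 1) = cauchyP q x y n * (x - q ^ n * y) :=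
  Finset.prod_range_succ _ _

lemma qPoch_ne_zero {q c : ℂ} (hq : ‖q‖ ≤ 1) (hc : ‖c‖ < 1) (n : ℕ) : qPoch q c n ≠ 0 :=
  Finset.prod_ne_zero_iff.mpr fun j _ =>
    one_sub_ne_zero_of_norm_lt_one (norm_mul_pow_lt_one hq hc j)

lemma qPoch_mul_qPoch_neg (q : ℂ) (n : ℕ) :
    qPoch q q n * qPoch q (-q) n = qPoch (q ^ 2) (q ^ 2) n := by
  simp only [qPoch, ← Finset.prod_mul_distrib]
  exact Finset.prod_congr rfl fun j _ => by ring

lemma one_sub_mul_pow_ne_zero {q : ℂ} (hq : ‖q‖ < 1) (m : ℕ) : 1 - q * q ^ m ≠ 0 :=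
  one_sub_ne_zero_of_norm_lt_one (norm_mul_pow_lt_one hq.le hq m)

lemma summable_norm_mul_pow {q : ℂ} (hq : ‖q‖ < 1) (c : ℂ) :
    Summable fun j : ℕ => ‖c * q ^ j‖ := by
  simpa [norm_mul, norm_pow] using
    (summable_geometric_of_lt_one (norm_nonneg q) hq).mul_left ‖c‖

lemma multipliable_one_sub_mul_pow {q : ℂ} (hq : ‖q‖ < 1) (c : ℂ) :
    Multipliable fun j : ℕ => 1 - c * q ^ j := by
  simpa [sub_eq_add_neg] using multipliable_one_add_of_summable (f := fun j => -(c * q ^ j))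
    (by simpa using summable_norm_mul_pow hq c)

lemma tendsto_qPoch_qPochInf {q : ℂ} (hq : ‖q‖ < 1) (c : ℂ) :
    Tendsto (qPoch q c) atTop (𝓝 (qPochInf q c)) :=
  (multipliable_one_sub_mul_pow hq c).hasProd.tendsto_prod_nat

lemma qPochInf_ne_zero {q c : ℂ} (hq : ‖q‖ < 1) (hc : ‖c‖ < 1) : qPochInf q c ≠ 0 := by
  have hne : ∀ j : ℕ, 1 + -(c * q ^ j) ≠ 0 := fun j => by
    simpa [← sub_eq_add_neg] using one_sub_ne_zero_of_norm_lt_one (norm_mul_pow_lt_one hq.le hc j)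
  simpa [qPochInf, sub_eq_add_neg] using
    tprod_one_add_ne_zero_of_summable hne (by simpa using summable_norm_mul_pow hq c)

end QPochhammer

lemma summable_norm_of_succ_eq_mul {R : Type*} [SeminormedRing R] {f ρ : ℕ → R} {l : R}
    (hl : ‖l‖ < 1) (hρ : Tendsto ρ atTop (𝓝 l)) (hf : ∀ n, f (n + 1) = f n * ρ n) :
    Summable fun n => ‖f n‖ := by
  obtain ⟨c, hlc, hc1⟩ := exists_between hl
  refine summable_of_ratio_norm_eventually_le hc1 ?_
  filter_upwards [hρ.norm.eventually_le_const hlc] with n hn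
  rw [norm_norm, norm_norm, hf, mul_comm c]
  exact (norm_mul_le _ _).trans (mul_le_mul_of_nonneg_left hn (norm_nonneg _))

section CauchyBinomial

variable {q : ℂ} (x y : ℂ)

def cauchyTerm (q x y u : ℂ) (m : ℕ) : ℂ := cauchyP q x y m * u ^ m / qPoch q q m

lemma cauchyTerm_zero (u : ℂ) : cauchyTerm q x y u 0 = 1 := by
  simp [cauchyTerm, cauchyP_zero, qPoch_zero]

lemma cauchyTerm_succ (hq : ‖q‖ < 1) (u : ℂ) (m : ℕ) :
    cauchyTerm q x y u (m + 1) =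
      cauchyTerm q x y u m * ((x - q ^ m * y) * u / (1 - q * q ^ m)) := by
  unfold cauchyTerm
  rw [cauchyP_succ, qPoch_succ, pow_succ]
  field_simp [qPoch_ne_zero hq.le hq m, one_sub_mul_pow_ne_zero hq m]

lemma cauchyTerm_mul_left (c u : ℂ) (m : ℕ) :
    cauchyTerm q x y (c * u) m = c ^ m * cauchyTerm q x y u m := by
  simp only [cauchyTerm, mul_pow]
  ring

lemma norm_mul_q_pow_mul_lt_one (hq : ‖q‖ < 1) {u : ℂ} (hu : ‖x * u‖ < 1) (N : ℕ) :
    ‖x * (q ^ N * u)‖ < 1 := by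
  rw [mul_left_comm, mul_comm]
  exact norm_mul_pow_lt_one hq.le hu N

lemma summable_norm_cauchyTerm (hq : ‖q‖ < 1) {u : ℂ} (hu : ‖x * u‖ < 1) :
    Summable fun m : ℕ => ‖cauchyTerm q x y u m‖ := by
  refine summable_norm_of_succ_eq_mul hu ?_ (cauchyTerm_succ x y hq u)
  have hxy : Tendsto (fun m : ℕ => x - q ^ m * y) atTop (𝓝 x) := by
    simpa [mul_comm] using
      tendsto_const_nhds.sub ((tendsto_pow_atTop_nhds_zero_of_norm_lt_one hq).mul_const y)
  rw [← div_one (x * u)]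
  exact (hxy.mul_const u).div (tendsto_one_sub_mul_pow hq q) one_ne_zero

lemma one_sub_mul_tsum_cauchyTerm (hq : ‖q‖ < 1) {u : ℂ} (hu : ‖x * u‖ < 1) :
    (1 - x * u) * ∑' m, cauchyTerm q x y u m =
      (1 - y * u) * ∑' m, cauchyTerm q x y (q * u) m := by
  have hqu : ‖x * (q * u)‖ < 1 := by simpa using norm_mul_q_pow_mul_lt_one x hq hu 1
  have hF := (summable_norm_cauchyTerm x y hq hu).of_norm
  have hFq := (summable_norm_cauchyTerm x y hq hqu).of_norm
  have hsucc : ∀ m : ℕ, cauchyTerm q x y u (m + 1) - cauchyTerm q x y (q * u) (m + 1)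
      = x * u * cauchyTerm q x y u m - y * u * cauchyTerm q x y (q * u) m := by
    intro m
    rw [cauchyTerm_succ x y hq, cauchyTerm_succ x y hq, cauchyTerm_mul_left]
    simp only [div_eq_mul_inv]
    linear_combination (cauchyTerm q x y u m * u * (x - q ^ m * y)) *
      mul_inv_cancel₀ (one_sub_mul_pow_ne_zero hq m)
  have hdiff : (∑' m, cauchyTerm q x y u m) - ∑' m, cauchyTerm q x y (q * u) m
      = x * u * (∑' m, cauchyTerm q x y u m) - y * u * ∑' m, cauchyTerm q x y (q * u) m := by
    rw [← hF.tsum_sub hFq, (hF.sub hFq).tsum_eq_zero_add,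
      cauchyTerm_zero, cauchyTerm_zero, sub_self, zero_add]
    simp only [hsucc]
    rw [(hF.mul_left _).tsum_sub (hFq.mul_left _), tsum_mul_left, tsum_mul_left]
  linear_combination hdiff

lemma tsum_cauchyTerm_mul_qPoch (hq : ‖q‖ < 1) {u : ℂ} (hu : ‖x * u‖ < 1) (N : ℕ) :
    (∑' m, cauchyTerm q x y u m) * qPoch q (x * u) N
      = qPoch q (y * u) N * ∑' m, cauchyTerm q x y (q ^ N * u) m := by
  induction N with
  | zero => simp [qPoch_zero]
  | succ N ih =>
    have hstep := one_sub_mul_tsum_cauchyTerm x y hq (norm_mul_q_pow_mul_lt_one x hq hu N)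
    rw [show q * (q ^ N * u) = q ^ (N + 1) * u by ring] at hstep
    rw [qPoch_succ, qPoch_succ]
    linear_combination (1 - x * u * q ^ N) * ih + qPoch q (y * u) N * hstep

lemma tendsto_tsum_cauchyTerm_q_pow_mul (hq : ‖q‖ < 1) {u : ℂ} (hu : ‖x * u‖ < 1) :
    Tendsto (fun N : ℕ => ∑' m, cauchyTerm q x y (q ^ N * u) m) atTop (𝓝 1) := by
  have hlim : ∑' m, cauchyTerm q x y 0 m = 1 := by
    rw [tsum_eq_single 0 fun m hm => by simp [cauchyTerm, zero_pow hm], cauchyTerm_zero]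
  rw [← hlim]
  simp only [cauchyTerm_mul_left]
  refine tendsto_tsum_of_dominated_convergence (summable_norm_cauchyTerm x y hq hu) (fun m => ?_) ?_
  · rw [← zero_mul u, cauchyTerm_mul_left]
    exact ((tendsto_pow_atTop_nhds_zero_of_norm_lt_one hq).pow m).mul_const _
  · refine Eventually.of_forall fun N m => ?_
    rw [norm_mul, norm_pow, norm_pow]
    exact mul_le_of_le_one_left (norm_nonneg _)
      (pow_le_one₀ (by positivity) (pow_le_one₀ (norm_nonneg q) hq.le))

theorem tsum_cauchyTerm (hq : ‖q‖ < 1) {u : ℂ} (hu : ‖x * u‖ < 1) :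
    ∑' m, cauchyTerm q x y u m = qPochInf q (y * u) / qPochInf q (x * u) := by
  rw [eq_div_iff (qPochInf_ne_zero hq hu)]
  refine tendsto_nhds_unique ((tendsto_qPoch_qPochInf hq (x * u)).const_mul _) ?_
  simpa only [tsum_cauchyTerm_mul_qPoch x y hq hu, mul_one] using
    (tendsto_qPoch_qPochInf hq (y * u)).mul (tendsto_tsum_cauchyTerm_q_pow_mul x y hq hu)

end CauchyBinomial

section GeneratingFunction

variable {q : ℂ} (α a x y z t : ℂ) (r s : ℤ)

def ltilGenTerm (q α a z t : ℂ) (r s : ℤ) (k : ℕ) : ℂ :=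
  qPoch q (-(q ^ (-α))) k * qPoch q a k / qPoch (q ^ 2) (q ^ 2) k *
    (q ^ ((k : ℂ) * α) * q ^ (r * (k.choose 2 : ℤ) - s * ((k + 1).choose 2 : ℤ))) *
    (z * t) ^ k

lemma choose_two_succ (k : ℕ) : (k + 1).choose 2 = k.choose 2 + k := by
  rw [Nat.choose_succ_succ, Nat.choose_one_right, add_comm]

lemma ltil_summand_mul_div_eq (hq0 : q ≠ 0) (hq : ‖q‖ < 1) {k n : ℕ} (hk : k ≤ n) :
    qBinom q n k * genQBinom q α k *
      q ^ (r * (k.choose 2 : ℤ) - s * ((k + 1).choose 2 : ℤ) + (k.choose 2 : ℤ)) *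
      qPoch q a k * cauchyP q x y (n - k) * z ^ k * t ^ n / qPoch q q n
    = ltilGenTerm q α a z t r s k * cauchyTerm q x y t (n - k) := by
  have hpow : q ^ (α * k - (k.choose 2 : ℂ)) *
        q ^ (r * (k.choose 2 : ℤ) - s * ((k + 1).choose 2 : ℤ) + (k.choose 2 : ℤ))
      = q ^ (α * k) * q ^ (r * (k.choose 2 : ℤ) - s * ((k + 1).choose 2 : ℤ)) := by
    simp only [← Complex.cpow_intCast, ← Complex.cpow_add _ _ hq0]
    congr 1
    push_cast
    ring
  have ht : t ^ n = t ^ k * t ^ (n - k) := by rw [← pow_add, Nat.add_sub_cancel' hk]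
  have hqq : ‖-q‖ < 1 := by rwa [norm_neg]
  unfold ltilGenTerm cauchyTerm qBinom genQBinom
  rw [← qPoch_mul_qPoch_neg, ht]
  field_simp [qPoch_ne_zero hq.le hq, qPoch_ne_zero hq.le hqq]
  linear_combination (qPoch q (-(q ^ (-α))) k * qPoch q a k * cauchyP q x y (n - k) * z ^ k *
    t ^ k * t ^ (n - k)) * hpow

open Finset in
lemma ltil_mul_div_eq_sum_antidiagonal (hq0 : q ≠ 0) (hq : ‖q‖ < 1) (n : ℕ) :
    Ltil q r s α x y z a n * t ^ n / qPoch q q n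
      = ∑ kl ∈ antidiagonal n, ltilGenTerm q α a z t r s kl.1 * cauchyTerm q x y t kl.2 := by
  rw [Nat.sum_antidiagonal_eq_sum_range_succ_mk, Ltil, sum_mul, sum_div]
  exact sum_congr rfl fun k hk =>
    ltil_summand_mul_div_eq α a x y z t r s hq0 hq (Nat.lt_succ_iff.mp (mem_range.mp hk))

lemma ltilGenTerm_succ (hq0 : q ≠ 0) (hq : ‖q‖ < 1) (k : ℕ) :
    ltilGenTerm q α a z t r s (k + 1) = ltilGenTerm q α a z t r s k *
      ((1 - -(q ^ (-α)) * q ^ k) * (1 - a * q ^ k) / (1 - q ^ 2 * (q ^ 2) ^ k) *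
        (q ^ α * q ^ (-s) * (z * t)) * (q ^ (r - s)) ^ k) := by
  have hq2 : ‖q ^ 2‖ < 1 := by rw [norm_pow]; exact pow_lt_one₀ (norm_nonneg q) hq two_ne_zero
  have hcpow : q ^ (((k + 1 : ℕ) : ℂ) * α) = q ^ ((k : ℂ) * α) * q ^ α := by
    rw [← Complex.cpow_add _ _ hq0]
    push_cast
    ring_nf
  have hzpow : q ^ (r * ((k + 1).choose 2 : ℤ) - s * ((k + 1 + 1).choose 2 : ℤ))
      = q ^ (r * (k.choose 2 : ℤ) - s * ((k + 1).choose 2 : ℤ)) *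
        (q ^ (-s) * (q ^ (r - s)) ^ k) := by
    rw [← zpow_natCast (q ^ (r - s)), ← zpow_mul, ← zpow_add₀ hq0, ← zpow_add₀ hq0,
      choose_two_succ (k + 1), choose_two_succ k]
    congr 1
    push_cast
    ring
  unfold ltilGenTerm
  rw [qPoch_succ, qPoch_succ, qPoch_succ, pow_succ (z * t), hcpow, hzpow]
  field_simp [qPoch_ne_zero hq2.le hq2, one_sub_mul_pow_ne_zero hq2 k]

lemma summable_norm_ltilGenTerm (hq0 : q ≠ 0) (hq : ‖q‖ < 1) (hrs : s < r) :
    Summable fun k : ℕ => ‖ltilGenTerm q α a z t r s k‖ := by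
  have hq2 : ‖q ^ 2‖ < 1 := by rw [norm_pow]; exact pow_lt_one₀ (norm_nonneg q) hq two_ne_zero
  have hqrs : ‖q ^ (r - s)‖ < 1 := by
    obtain ⟨n, hn⟩ := Int.eq_ofNat_of_zero_le (sub_nonneg.mpr hrs.le)
    have hn0 : n ≠ 0 := by omega
    rw [hn, zpow_natCast, norm_pow]
    exact pow_lt_one₀ (norm_nonneg q) hq hn0
  refine summable_norm_of_succ_eq_mul (l := 0) (by simp) ?_ (ltilGenTerm_succ α a z t r s hq0 hq)
  have hρ := ((((tendsto_one_sub_mul_pow hq (-(q ^ (-α)))).mul (tendsto_one_sub_mul_pow hq a)).div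
    (tendsto_one_sub_mul_pow hq2 (q ^ 2)) one_ne_zero).mul_const (q ^ α * q ^ (-s) * (z * t))).mul
    (tendsto_pow_atTop_nhds_zero_of_norm_lt_one hqrs)
  rwa [mul_zero] at hρ

end GeneratingFunction

/-- Generating function for the generalized q-polynomials. -/
theorem stmt1 (q : ℂ) (hq0 : q ≠ 0) (hq1 : ‖q‖ < 1) (α a x y z t : ℂ) (r s : ℤ)
    (hrs : s < r) (hxt : ‖x * t‖ < 1) :
    Summable (fun n : ℕ => ‖Ltil q r s α x y z a n * t ^ n / qPoch q q n‖) ∧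
    Summable (fun k : ℕ => ‖qPoch q (-(q ^ (-α))) k * qPoch q a k / qPoch (q ^ 2) (q ^ 2) k *
        (q ^ ((k : ℂ) * α) * q ^ (r * (k.choose 2 : ℤ) - s * ((k + 1).choose 2 : ℤ))) *
        (z * t) ^ k‖) ∧
    ∑' n : ℕ, Ltil q r s α x y z a n * t ^ n / qPoch q q n =
      qPochInf q (y * t) / qPochInf q (x * t) *
        ∑' k : ℕ, qPoch q (-(q ^ (-α))) k * qPoch q a k / qPoch (q ^ 2) (q ^ 2) k *
          (q ^ ((k : ℂ) * α) * q ^ (r * (k.choose 2 : ℤ) - s * ((k + 1).choose 2 : ℤ))) *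
          (z * t) ^ k := by
  have hA := summable_norm_ltilGenTerm α a z t r s hq0 hq1 hrs
  have hB := summable_norm_cauchyTerm x y hq1 hxt
  have hL := ltil_mul_div_eq_sum_antidiagonal α a x y z t r s hq0 hq1
  refine ⟨?_, hA, ?_⟩
  · simpa only [hL] using summable_norm_sum_mul_antidiagonal_of_summable_norm hA hB
  · rw [tsum_congr hL, ← tsum_mul_tsum_eq_tsum_sum_antidiagonal_of_summable_norm hA hB,
      tsum_cauchyTerm x y hq1 hxt, mul_comm]
    rfl

end
end

section
/- Let σ, x, u, v, t ∈ ℂ with u ≠ 0, |ut| < 1, |uxt| < 1, and v t q^m ≠ 1 for all integers m ≥ 0. Then the series ∑_{n=0}^∞ φ_n^{(σ)}(x|q) · p_n(u,v) · t^n/(q;q)_n converges absolutely and its sum equals ((vt;q)_∞/(ut;q)_∞) · ₂Φ₁[v/u, σ; vt; q; uxt]. -/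
noncomputable section

/-!
Expanding `φ_n^{(σ)}` and splitting `p_{k+m}(u,v) = p_k(u,v) · u^m · (q^k v/u; q)_m` turns the
series into an absolutely convergent double series over `(k, m)`. Summing over `m` first, the
q-binomial theorem `∑ (a;q)_m / (q;q)_m · z^m = (az;q)_∞ / (z;q)_∞` gives
`(q^k vt;q)_∞ / (ut;q)_∞ = (vt;q)_∞ / ((vt;q)_k (ut;q)_∞)`, and the remaining
sum over `k` is the `₂Φ₁`. The q-binomial theorem itself comes from the functional equation
`(1 - z) f(z) = (1 - az) f(qz)` of its left side, iterated `N` times with `N → ∞`.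
-/

open Finset Filter Topology

theorem hasSum_sum_antidiagonal {A E : Type*} [AddCommMonoid A] [HasAntidiagonal A]
    [AddCommMonoid E] [TopologicalSpace E] [ContinuousAdd E] [RegularSpace E]
    {F : A × A → E} {s : E} (hF : HasSum F s) :
    HasSum (fun n => ∑ p ∈ antidiagonal n, F p) s :=
  (HasAntidiagonal.sigmaAntidiagonalEquivProd.hasSum_iff.mpr hF).sigma fun n =>
    (antidiagonal n).hasSum F

theorem summable_norm_sum_antidiagonal {A E : Type*} [AddCommMonoid A] [HasAntidiagonal A]
    [SeminormedAddCommGroup E] {F : A × A → E} (hF : Summable (‖F ·‖)) :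
    Summable fun n => ‖∑ p ∈ antidiagonal n, F p‖ :=
  (hasSum_sum_antidiagonal hF.hasSum).summable.of_nonneg_of_le (fun _ => norm_nonneg _)
    fun _ => norm_sum_le _ _

namespace QSeries

variable {q : ℂ}

theorem qPoch_succ (a : ℂ) (n : ℕ) : qPoch q a (n + 1) = qPoch q a n * (1 - a * q ^ n) :=
  prod_range_succ _ _

theorem qPoch_add (a : ℂ) (m n : ℕ) :
    qPoch q a (m + n) = qPoch q a m * qPoch q (a * q ^ m) n := by
  simp only [qPoch, prod_range_add, pow_add, mul_assoc]

theorem qPoch_ne_zero {a : ℂ} (ha : ∀ j : ℕ, 1 - a * q ^ j ≠ 0) (n : ℕ) :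
    qPoch q a n ≠ 0 :=
  prod_ne_zero_iff.mpr fun j _ => ha j

theorem cauchyP_eq_pow_mul_qPoch {u : ℂ} (hu : u ≠ 0) (v : ℂ) (n : ℕ) :
    cauchyP q u v n = u ^ n * qPoch q (v / u) n := by
  rw [cauchyP, qPoch, pow_eq_prod_const u n, ← prod_mul_distrib]
  refine prod_congr rfl fun j _ => ?_
  field_simp

def qBinomialSeries (q a w : ℂ) : ℂ := ∑' n : ℕ, qPoch q a n / qPoch q q n * w ^ n

variable (hq : ‖q‖ < 1)
include hq

theorem one_sub_mul_pow_ne_zero {a : ℂ} (ha : ‖a‖ < 1) (j : ℕ) : 1 - a * q ^ j ≠ 0 := by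
  refine sub_ne_zero.mpr (ne_of_apply_ne norm fun h => ?_)
  have : ‖a * q ^ j‖ < 1 := by
    rw [norm_mul, norm_pow]
    exact mul_lt_one_of_nonneg_of_lt_one_left (norm_nonneg a) ha
      (pow_le_one₀ (norm_nonneg q) hq.le)
  rw [← h, norm_one] at this
  exact lt_irrefl _ this

theorem summable_norm_mul_pow (a : ℂ) : Summable fun j : ℕ => ‖a * q ^ j‖ := by
  simpa only [norm_mul, norm_pow] using
    (summable_geometric_of_lt_one (norm_nonneg q) hq).mul_left ‖a‖

theorem multipliable_one_sub_mul_pow (a : ℂ) : Multipliable fun j : ℕ => 1 - a * q ^ j := by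
  simpa only [sub_eq_add_neg] using
    multipliable_one_add_of_summable (f := fun j => -(a * q ^ j))
      (by simpa only [norm_neg] using summable_norm_mul_pow hq a)

theorem tendsto_qPoch (a : ℂ) : Tendsto (qPoch q a) atTop (𝓝 (qPochInf q a)) :=
  (multipliable_one_sub_mul_pow hq a).hasProd.tendsto_prod_nat

theorem qPochInf_ne_zero {a : ℂ} (ha : ∀ j : ℕ, 1 - a * q ^ j ≠ 0) :
    qPochInf q a ≠ 0 := by
  simp only [qPochInf, sub_eq_add_neg] at ha ⊢
  exact tprod_one_add_ne_zero_of_summable ha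
    (by simpa only [norm_neg] using summable_norm_mul_pow hq a)

theorem qPoch_mul_qPochInf (a : ℂ) (k : ℕ) :
    qPoch q a k * qPochInf q (a * q ^ k) = qPochInf q a := by
  have hshift : (fun j => 1 - a * q ^ k * q ^ j) = fun j => 1 - a * q ^ (j + k) := by
    ext j; ring
  have h := multipliable_one_sub_mul_pow hq (a * q ^ k)
  rw [hshift] at h
  unfold qPoch qPochInf
  rw [hshift]
  exact Multipliable.prod_mul_tprod_nat_mul' (f := fun j : ℕ => 1 - a * q ^ j) h

theorem norm_qPoch_le_exp {a : ℂ} {r : ℝ} (ha : ‖a‖ ≤ r) (n : ℕ) :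
    ‖qPoch q a n‖ ≤ Real.exp (r / (1 - ‖q‖)) := by
  have hr : 0 ≤ r := (norm_nonneg a).trans ha
  have hgeom := summable_geometric_of_lt_one (norm_nonneg q) hq
  rw [qPoch, norm_prod]
  calc ∏ j ∈ range n, ‖1 - a * q ^ j‖
      ≤ ∏ j ∈ range n, Real.exp (r * ‖q‖ ^ j) := by
        refine prod_le_prod (fun j _ => norm_nonneg _) fun j _ => ?_
        calc ‖1 - a * q ^ j‖ ≤ ‖(1 : ℂ)‖ + ‖a‖ * ‖q‖ ^ j := by
              simpa only [norm_mul, norm_pow] using norm_sub_le (1 : ℂ) (a * q ^ j)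
          _ ≤ r * ‖q‖ ^ j + 1 := by
              rw [norm_one, add_comm]
              gcongr
          _ ≤ Real.exp (r * ‖q‖ ^ j) := Real.add_one_le_exp _
    _ = Real.exp (r * ∑ j ∈ range n, ‖q‖ ^ j) := by rw [← Real.exp_sum, mul_sum]
    _ ≤ Real.exp (r / (1 - ‖q‖)) := by
        rw [div_eq_mul_inv, ← tsum_geometric_of_lt_one (norm_nonneg q) hq]
        gcongr
        exact hgeom.sum_le_tsum _ fun j _ => pow_nonneg (norm_nonneg q) j

theorem exists_norm_qPoch_div_qPoch_le (r : ℝ) :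
    ∃ C, ∀ a : ℂ, ‖a‖ ≤ r → ∀ n, ‖qPoch q a n / qPoch q q n‖ ≤ C := by
  have hlim := ((tendsto_qPoch hq q).inv₀
    (qPochInf_ne_zero hq (one_sub_mul_pow_ne_zero hq hq))).norm
  obtain ⟨D, hD⟩ := hlim.bddAbove_range
  refine ⟨Real.exp (r / (1 - ‖q‖)) * D, fun a ha n => ?_⟩
  rw [div_eq_mul_inv, norm_mul]
  exact mul_le_mul (norm_qPoch_le_exp hq ha n) (hD ⟨n, rfl⟩) (norm_nonneg _) (Real.exp_pos _).le

theorem summable_norm_qPoch_div_qPoch_mul_pow (a : ℂ) {w : ℂ} (hw : ‖w‖ < 1) :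
    Summable fun n => ‖qPoch q a n / qPoch q q n * w ^ n‖ := by
  obtain ⟨C, hC⟩ := exists_norm_qPoch_div_qPoch_le hq ‖a‖
  refine ((summable_geometric_of_lt_one (norm_nonneg w) hw).mul_left C).of_nonneg_of_le
    (fun _ => norm_nonneg _) fun n => ?_
  rw [norm_mul, norm_pow]
  exact mul_le_mul_of_nonneg_right (hC a le_rfl n) (by positivity)

theorem qPoch_div_qPoch_succ_mul (a : ℂ) (n : ℕ) :
    qPoch q a (n + 1) / qPoch q q (n + 1) * (1 - q ^ (n + 1)) =
      qPoch q a n / qPoch q q n * (1 - a * q ^ n) := by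
  have hqq := qPoch_ne_zero (one_sub_mul_pow_ne_zero hq hq) n
  have hq' : 1 - q ^ (n + 1) ≠ 0 := pow_succ' q n ▸ one_sub_mul_pow_ne_zero hq hq n
  rw [qPoch_succ, qPoch_succ, ← pow_succ']
  field_simp

theorem qBinomialSeries_functional_eq (a : ℂ) {w : ℂ} (hw : ‖w‖ < 1) :
    (1 - w) * qBinomialSeries q a w = (1 - a * w) * qBinomialSeries q a (q * w) := by
  have hqw : ‖q * w‖ < 1 := by
    rw [norm_mul]
    exact mul_lt_one_of_nonneg_of_lt_one_right hq.le (norm_nonneg w) hw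
  have h1 := (summable_norm_qPoch_div_qPoch_mul_pow hq a hw).of_norm.hasSum
  have h2 := (summable_norm_qPoch_div_qPoch_mul_pow hq a hqw).of_norm.hasSum
  have hdiff := (hasSum_nat_add_iff' 1).mpr (h1.sub h2)
  have hshift := (h1.sub (h2.mul_left a)).mul_left w
  have hterm : ∀ n : ℕ, w * (qPoch q a n / qPoch q q n * w ^ n -
      a * (qPoch q a n / qPoch q q n * (q * w) ^ n)) =
      qPoch q a (n + 1) / qPoch q q (n + 1) * w ^ (n + 1) -
        qPoch q a (n + 1) / qPoch q q (n + 1) * (q * w) ^ (n + 1) := fun n => by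
    linear_combination -w ^ (n + 1) * qPoch_div_qPoch_succ_mul hq a n
  simp only [hterm] at hshift
  simp only [sum_range_one, pow_zero, sub_self, sub_zero] at hdiff
  rw [qBinomialSeries, qBinomialSeries]
  linear_combination hdiff.unique hshift

theorem norm_pow_mul_le {z : ℂ} (N : ℕ) : ‖q ^ N * z‖ ≤ ‖z‖ := by
  rw [norm_mul, norm_pow]
  exact mul_le_of_le_one_left (norm_nonneg z) (pow_le_one₀ (norm_nonneg q) hq.le)

theorem qPoch_mul_qBinomialSeries (a : ℂ) {z : ℂ} (hz : ‖z‖ < 1) (N : ℕ) :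
    qPoch q z N * qBinomialSeries q a z = qPoch q (a * z) N * qBinomialSeries q a (q ^ N * z) := by
  induction N with
  | zero => simp [qPoch]
  | succ N ih =>
    have hstep := qBinomialSeries_functional_eq hq a ((norm_pow_mul_le hq N).trans_lt hz)
    rw [← mul_assoc q, ← pow_succ'] at hstep
    rw [qPoch_succ, qPoch_succ]
    linear_combination (1 - z * q ^ N) * ih + qPoch q (a * z) N * hstep

theorem tendsto_qBinomialSeries_pow_mul (a : ℂ) {z : ℂ} (hz : ‖z‖ < 1) :
    Tendsto (fun N => qBinomialSeries q a (q ^ N * z)) atTop (𝓝 1) := by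
  have hlim : Tendsto (fun N => q ^ N * z) atTop (𝓝 0) := by
    simpa using (tendsto_pow_atTop_nhds_zero_of_norm_lt_one hq).mul_const z
  have h := tendsto_tsum_of_dominated_convergence (summable_norm_qPoch_div_qPoch_mul_pow hq a hz)
    (fun n => ((hlim.pow n).const_mul (qPoch q a n / qPoch q q n)))
    (Eventually.of_forall fun N n => by
      simp only [norm_mul, norm_pow]
      gcongr
      simpa only [norm_mul, norm_pow] using norm_pow_mul_le hq N)
  rwa [tsum_eq_single 0 fun n hn => by simp [hn], pow_zero, mul_one,
    show qPoch q a 0 / qPoch q q 0 = 1 by simp [qPoch]] at h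

/-- The q-binomial theorem. -/
theorem hasSum_qBinomialSeries (a : ℂ) {z : ℂ} (hz : ‖z‖ < 1) :
    HasSum (fun n => qPoch q a n / qPoch q q n * z ^ n) (qPochInf q (a * z) / qPochInf q z) := by
  have hlim := (tendsto_qPoch hq z).mul_const (qBinomialSeries q a z)
  have hlim' := (tendsto_qPoch hq (a * z)).mul (tendsto_qBinomialSeries_pow_mul hq a hz)
  simp only [← qPoch_mul_qBinomialSeries hq a hz, mul_one] at hlim'
  have hval : qPochInf q z * qBinomialSeries q a z = qPochInf q (a * z) :=
    tendsto_nhds_unique hlim hlim'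
  rw [← hval, mul_div_cancel_left₀ _ (qPochInf_ne_zero hq (one_sub_mul_pow_ne_zero hq hz))]
  exact (summable_norm_qPoch_div_qPoch_mul_pow hq a hz).of_norm.hasSum

end QSeries

open QSeries

def hahnCauchyTerm (q σ x u v t : ℂ) (p : ℕ × ℕ) : ℂ :=
  qPoch q σ p.1 / qPoch q q p.1 * qPoch q (v / u) p.1 * (u * x * t) ^ p.1 *
    (qPoch q (v / u * q ^ p.1) p.2 / qPoch q q p.2 * (u * t) ^ p.2)

section HahnCauchy

variable {q : ℂ} (hq : ‖q‖ < 1) (σ x : ℂ) {u : ℂ} (v t : ℂ)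
include hq

theorem hahnPhi_mul_cauchyP_eq_sum_antidiagonal (hu : u ≠ 0) (n : ℕ) :
    hahnPhi q σ x n * cauchyP q u v n * t ^ n / qPoch q q n =
      ∑ p ∈ antidiagonal n, hahnCauchyTerm q σ x u v t p := by
  have hqq := qPoch_ne_zero (one_sub_mul_pow_ne_zero hq hq)
  rw [Nat.sum_antidiagonal_eq_sum_range_succ_mk, hahnPhi, sum_mul, sum_mul, sum_div]
  refine sum_congr rfl fun k hk => ?_
  obtain ⟨m, rfl⟩ := Nat.exists_eq_add_of_le (mem_range_succ_iff.mp hk)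
  rw [hahnCauchyTerm, qBinom, add_tsub_cancel_left, cauchyP_eq_pow_mul_qPoch hu,
    qPoch_add (v / u) k m]
  field_simp [hqq k, hqq m, hqq (k + m)]
  ring

theorem summable_norm_hahnCauchyTerm (hut : ‖u * t‖ < 1) (huxt : ‖u * x * t‖ < 1) :
    Summable fun p => ‖hahnCauchyTerm q σ x u v t p‖ := by
  obtain ⟨C₁, hC₁⟩ := exists_norm_qPoch_div_qPoch_le hq ‖σ‖
  obtain ⟨C₂, hC₂⟩ := exists_norm_qPoch_div_qPoch_le hq ‖v / u‖
  set E := Real.exp (‖v / u‖ / (1 - ‖q‖))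
  have hgeom₁ := (summable_geometric_of_lt_one (norm_nonneg _) huxt).mul_left (C₁ * E)
  have hgeom₂ := (summable_geometric_of_lt_one (norm_nonneg _) hut).mul_left C₂
  have hC₁0 : 0 ≤ C₁ := (norm_nonneg _).trans (hC₁ σ le_rfl 0)
  have hC₂0 : 0 ≤ C₂ := (norm_nonneg _).trans (hC₂ (v / u) le_rfl 0)
  refine (hgeom₁.mul_of_nonneg hgeom₂ (fun _ => by positivity) fun _ => by positivity)
    |>.of_nonneg_of_le (fun _ => norm_nonneg _) fun ⟨k, m⟩ => ?_
  have hsmall : ‖v / u * q ^ k‖ ≤ ‖v / u‖ := by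
    rw [mul_comm]
    exact norm_pow_mul_le hq k
  simp only [hahnCauchyTerm, norm_mul, norm_pow]
  gcongr
  · exact hC₁ σ le_rfl k
  · exact norm_qPoch_le_exp hq le_rfl k
  · exact hC₂ _ hsmall m

theorem hasSum_hahnCauchyTerm_fiber (hu : u ≠ 0) (hut : ‖u * t‖ < 1)
    (hvt : ∀ m : ℕ, v * t * q ^ m ≠ 1) (k : ℕ) :
    HasSum (fun m => hahnCauchyTerm q σ x u v t (k, m))
      (qPochInf q (v * t) / qPochInf q (u * t) *
        (qPoch q (v / u) k * qPoch q σ k / (qPoch q (v * t) k * qPoch q q k) *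
          (u * x * t) ^ k)) := by
  have hvtk : qPoch q (v * t) k ≠ 0 := qPoch_ne_zero (fun j => sub_ne_zero.mpr (hvt j).symm) k
  have hqq : qPoch q q k ≠ 0 := qPoch_ne_zero (one_sub_mul_pow_ne_zero hq hq) k
  have harg : v / u * q ^ k * (u * t) = v * t * q ^ k := by field_simp
  have h := (hasSum_qBinomialSeries hq (v / u * q ^ k) hut).mul_left
    (qPoch q σ k / qPoch q q k * qPoch q (v / u) k * (u * x * t) ^ k)
  rw [harg, ← mul_div_cancel_left₀ (qPochInf q (v * t * q ^ k)) hvtk,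
    qPoch_mul_qPochInf hq] at h
  convert h using 1 <;> first | rfl | field_simp

end HahnCauchy

theorem stmt10_general (q : ℂ) (hq1 : ‖q‖ < 1) (σ x u v t : ℂ) (hu : u ≠ 0)
    (hut : ‖u * t‖ < 1) (huxt : ‖u * x * t‖ < 1)
    (hvt : ∀ m : ℕ, v * t * q ^ m ≠ 1) :
    Summable (fun n : ℕ => ‖hahnPhi q σ x n * cauchyP q u v n * t ^ n / qPoch q q n‖) ∧
    ∑' n : ℕ, hahnPhi q σ x n * cauchyP q u v n * t ^ n / qPoch q q n =
      qPochInf q (v * t) / qPochInf q (u * t) * Phi21 q (v / u) σ (v * t) (u * x * t) := by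
  have hexpand := hahnPhi_mul_cauchyP_eq_sum_antidiagonal hq1 σ x v t hu
  have hnorm := summable_norm_hahnCauchyTerm hq1 σ x v t hut huxt
  have hsum := hnorm.of_norm.hasSum
  refine ⟨by simpa only [hexpand] using summable_norm_sum_antidiagonal hnorm, ?_⟩
  have hdiag : HasSum (fun n => hahnPhi q σ x n * cauchyP q u v n * t ^ n / qPoch q q n)
      (∑' p, hahnCauchyTerm q σ x u v t p) := by
    simpa only [hexpand] using hasSum_sum_antidiagonal hsum
  have hrows := hsum.prod_fiberwise (hasSum_hahnCauchyTerm_fiber hq1 σ x v t hu hut hvt)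
  rw [hdiag.tsum_eq, ← hrows.tsum_eq, tsum_mul_left, Phi21]

/-- Srivastava–Agarwal type generating function with Cauchy polynomials. -/
theorem stmt10 (q : ℂ) (hq0 : q ≠ 0) (hq1 : ‖q‖ < 1) (σ x u v t : ℂ) (hu : u ≠ 0)
    (hut : ‖u * t‖ < 1) (huxt : ‖u * x * t‖ < 1)
    (hvt : ∀ m : ℕ, v * t * q ^ m ≠ 1) :
    Summable (fun n : ℕ => ‖hahnPhi q σ x n * cauchyP q u v n * t ^ n / qPoch q q n‖) ∧
    ∑' n : ℕ, hahnPhi q σ x n * cauchyP q u v n * t ^ n / qPoch q q n =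
      qPochInf q (v * t) / qPochInf q (u * t) * Phi21 q (v / u) σ (v * t) (u * x * t) :=
  stmt10_general q hq1 σ x u v t hu hut huxt hvt
end
end
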